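/- arXiv:2210.00935 — 3 statements merged into one kernel-verified Lean document; each statement's English description precedes it below -/
import Mathlib

section
/- Failure of the Riemannian approximations away from the origin: for every y ∈ ℝ one has ρ_b(0,y,0) = ρ_c(0,y,0) = u₁(0,y,0) = w₂|y|; moreover, if w₂ > w₁ and |y| > w₃π/(w₂ − w₁), then ρ_b(0,y,0) > w₁|y| + w₃π ≥ d(0,y,0), so the half-angle approximation strictly overestimates the exact distance there. -/
open Real Set

noncomputable section

/-- Points of `ℝ³` in coordinates `(x, y, θ)`. -/
abbrev Pt : Type := ℝ × ℝ × ℝ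

def ptX (p : Pt) : ℝ := p.1
def ptY (p : Pt) : ℝ := p.2.1
def ptTheta (p : Pt) : ℝ := p.2.2

/-- Half-angle coordinate `b¹`. -/
def b1 (p : Pt) : ℝ := ptX p * Real.cos (ptTheta p / 2) + ptY p * Real.sin (ptTheta p / 2)
/-- Half-angle coordinate `b²`. -/
def b2 (p : Pt) : ℝ := -ptX p * Real.sin (ptTheta p / 2) + ptY p * Real.cos (ptTheta p / 2)
/-- Half-angle coordinate `b³`. -/
def b3 (p : Pt) : ℝ := ptTheta p

/-- `sinc u = sin u / u`, with `sinc 0 = 1`. -/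
def sinc (u : ℝ) : ℝ := if u = 0 then 1 else Real.sin u / u

/-- Logarithmic coordinate `c¹`. -/
def c1 (p : Pt) : ℝ := b1 p / _root_.sinc (ptTheta p / 2)
/-- Logarithmic coordinate `c²`. -/
def c2 (p : Pt) : ℝ := b2 p / _root_.sinc (ptTheta p / 2)
/-- Logarithmic coordinate `c³`. -/
def c3 (p : Pt) : ℝ := ptTheta p

/-- Fundamental symmetry `ε²`. -/
def eps2 (p : Pt) : Pt :=
  (-ptX p * Real.cos (ptTheta p) - ptY p * Real.sin (ptTheta p),
    -ptX p * Real.sin (ptTheta p) + ptY p * Real.cos (ptTheta p), ptTheta p)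

/-- Fundamental symmetry `ε¹`. -/
def eps1 (p : Pt) : Pt :=
  (ptX p * Real.cos (ptTheta p) + ptY p * Real.sin (ptTheta p),
    ptX p * Real.sin (ptTheta p) - ptY p * Real.cos (ptTheta p), ptTheta p)

/-- Fundamental symmetry `ε⁶`. -/
def eps6 (p : Pt) : Pt :=
  (ptX p * Real.cos (ptTheta p) + ptY p * Real.sin (ptTheta p),
    -ptX p * Real.sin (ptTheta p) + ptY p * Real.cos (ptTheta p), -ptTheta p)

/-- `γ` is piecewise `C¹` on `[a,b]`: continuous on `[a,b]` and differentiable away from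
finitely many points. -/
def PiecewiseC1On (γ : ℝ → Pt) (a b : ℝ) : Prop :=
  ContinuousOn γ (Set.Icc a b) ∧
    ∃ S : Finset ℝ, ∀ s ∈ Set.Icc a b, s ∉ S → DifferentiableAt ℝ γ s

/-- The Riemannian speed `‖γ̇(s)‖` of a curve w.r.t. the left-invariant metric with
parameters `w₁, w₂, w₃`. -/
def speed (w₁ w₂ w₃ : ℝ) (γ : ℝ → Pt) (s : ℝ) : ℝ :=
  Real.sqrt
    (w₁ ^ 2 * (Real.cos (ptTheta (γ s)) * deriv (fun t => ptX (γ t)) s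
        + Real.sin (ptTheta (γ s)) * deriv (fun t => ptY (γ t)) s) ^ 2
      + w₂ ^ 2 * (-Real.sin (ptTheta (γ s)) * deriv (fun t => ptX (γ t)) s
        + Real.cos (ptTheta (γ s)) * deriv (fun t => ptY (γ t)) s) ^ 2
      + w₃ ^ 2 * (deriv (fun t => ptTheta (γ t)) s) ^ 2)

/-- Riemannian length of the curve `γ : [a,b] → ℝ³`. -/
def rLength (w₁ w₂ w₃ : ℝ) (γ : ℝ → Pt) (a b : ℝ) : ℝ := ∫ s in a..b, speed w₁ w₂ w₃ γ s

/-- `γ t` reaches `q` up to a multiple of `2π` in the angular variable. -/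
def EndsAt (γ : ℝ → Pt) (t : ℝ) (q : Pt) : Prop :=
  ∃ k : ℤ, γ t = (ptX q, ptY q, ptTheta q + 2 * Real.pi * (k : ℝ))

/-- Exact Riemannian distance from the origin. -/
def rDist (w₁ w₂ w₃ : ℝ) (p : Pt) : ℝ :=
  sInf { l : ℝ | ∃ γ : ℝ → Pt, PiecewiseC1On γ 0 1 ∧ γ 0 = ((0 : ℝ), (0 : ℝ), (0 : ℝ)) ∧
    EndsAt γ 1 p ∧ l = rLength w₁ w₂ w₃ γ 0 1 }

/-- A curve is horizontal: no sideways (`A₂`) motion. -/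
def Horizontal (γ : ℝ → Pt) (a b : ℝ) : Prop :=
  ∀ s ∈ Set.Icc a b,
    -Real.sin (ptTheta (γ s)) * deriv (fun t => ptX (γ t)) s
      + Real.cos (ptTheta (γ s)) * deriv (fun t => ptY (γ t)) s = 0

/-- Sub-Riemannian distance from the origin, valued in `[0,∞]`. -/
def srDist (w₁ w₂ w₃ : ℝ) (p : Pt) : ENNReal :=
  sInf { l : ENNReal | ∃ γ : ℝ → Pt, PiecewiseC1On γ 0 1 ∧ Horizontal γ 0 1 ∧
    γ 0 = ((0 : ℝ), (0 : ℝ), (0 : ℝ)) ∧ EndsAt γ 1 p ∧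
    l = ENNReal.ofReal (rLength w₁ w₂ w₃ γ 0 1) }

/-- Half-angle distance approximation `ρ_b`. -/
def rhoB (w₁ w₂ w₃ : ℝ) (p : Pt) : ℝ :=
  Real.sqrt ((w₁ * b1 p) ^ 2 + (w₂ * b2 p) ^ 2 + (w₃ * b3 p) ^ 2)

/-- Logarithmic distance approximation `ρ_c`. -/
def rhoC (w₁ w₂ w₃ : ℝ) (p : Pt) : ℝ :=
  Real.sqrt ((w₁ * c1 p) ^ 2 + (w₂ * c2 p) ^ 2 + (w₃ * c3 p) ^ 2)

/-- Lower bound `l`. -/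
def lBnd (w₁ w₃ : ℝ) (p : Pt) : ℝ :=
  Real.sqrt ((w₁ * ptX p) ^ 2 + (w₁ * ptY p) ^ 2 + (w₃ * ptTheta p) ^ 2)

/-- Upper bound `u₁`. -/
def u1Bnd (w₂ w₃ : ℝ) (p : Pt) : ℝ :=
  Real.sqrt ((w₂ * ptX p) ^ 2 + (w₂ * ptY p) ^ 2 + (w₃ * ptTheta p) ^ 2)

/-- Upper bound `u₂`. -/
def u2Bnd (w₁ w₃ : ℝ) (p : Pt) : ℝ :=
  w₁ * Real.sqrt (ptX p ^ 2 + ptY p ^ 2) + w₃ * Real.pi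

/-- Exact morphological kernel `k = (t/β)(d/t)^β`. -/
def kerExact (w₁ w₂ w₃ t β : ℝ) (p : Pt) : ℝ := (t / β) * (rDist w₁ w₂ w₃ p / t) ^ β

/-- Approximative morphological kernel `k_b = (t/β)(ρ_b/t)^β`. -/
def kerB (w₁ w₂ w₃ t β : ℝ) (p : Pt) : ℝ := (t / β) * (rhoB w₁ w₂ w₃ p / t) ^ β

/-- Left-invariant derivative `A₁ f = cos θ ∂ₓ f + sin θ ∂_y f`. -/
def A1d (f : Pt → ℝ) (p : Pt) : ℝ :=
  Real.cos (ptTheta p) * deriv (fun x => f (x, ptY p, ptTheta p)) (ptX p)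
    + Real.sin (ptTheta p) * deriv (fun y => f (ptX p, y, ptTheta p)) (ptY p)

/-- Left-invariant derivative `A₂ f = -sin θ ∂ₓ f + cos θ ∂_y f`. -/
def A2d (f : Pt → ℝ) (p : Pt) : ℝ :=
  -Real.sin (ptTheta p) * deriv (fun x => f (x, ptY p, ptTheta p)) (ptX p)
    + Real.cos (ptTheta p) * deriv (fun y => f (ptX p, y, ptTheta p)) (ptY p)

/-- Left-invariant derivative `A₃ f = ∂_θ f`. -/
def A3d (f : Pt → ℝ) (p : Pt) : ℝ := deriv (fun θ => f (ptX p, ptY p, θ)) (ptTheta p)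

/-- Squared dual norm of the differential of `ρ_b`:
`‖dρ_b‖_*² = w₁⁻²(A₁ρ_b)² + w₂⁻²(A₂ρ_b)² + w₃⁻²(A₃ρ_b)²`. -/
def dualNormSq (w₁ w₂ w₃ : ℝ) (p : Pt) : ℝ :=
  w₁⁻¹ ^ 2 * (A1d (rhoB w₁ w₂ w₃) p) ^ 2 + w₂⁻¹ ^ 2 * (A2d (rhoB w₁ w₂ w₃) p) ^ 2
    + w₃⁻¹ ^ 2 * (A3d (rhoB w₁ w₂ w₃) p) ^ 2

/-- Exact Riemannian distance between two points, as an infimum over curves `[0,t] → ℝ³`. -/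
def rDist2 (w₁ w₂ w₃ t : ℝ) (p q : Pt) : ℝ :=
  sInf { l : ℝ | ∃ γ : ℝ → Pt, PiecewiseC1On γ 0 t ∧ γ 0 = p ∧ EndsAt γ t q ∧
    l = rLength w₁ w₂ w₃ γ 0 t }

/-
Both approximations only see the sideways (`A₂`) displacement `y`, which costs `w₂ |y|`. The true
distance is at most the length of the curve that turns by `π/2`, drives the distance `y` along
its (now vertical) main direction `A₁` at cost `w₁ |y|`, and turns back, at total turning cost
`w₃ π`. For `|y| > w₃ π / (w₂ - w₁)` this detour is strictly shorter than `w₂ |y|`.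
-/

open Filter Topology MeasureTheory

theorem sqrt_mul_sq_eq_mul_abs {w y : ℝ} (hw : 0 ≤ w) : √((w * y) ^ 2) = w * |y| := by
  rw [sqrt_sq_eq_abs, abs_mul, abs_of_nonneg hw]

theorem speed_eq_of_hasDerivAt {w₁ w₂ w₃ : ℝ} {γ : ℝ → Pt} {v : Pt} {s : ℝ}
    (h : HasDerivAt γ v s) :
    speed w₁ w₂ w₃ γ s =
      √(w₁ ^ 2 * (cos (ptTheta (γ s)) * v.1 + sin (ptTheta (γ s)) * v.2.1) ^ 2
        + w₂ ^ 2 * (-sin (ptTheta (γ s)) * v.1 + cos (ptTheta (γ s)) * v.2.1) ^ 2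
        + w₃ ^ 2 * v.2.2 ^ 2) := by
  have hx : deriv (fun t => ptX (γ t)) s = v.1 := by
    simpa [ptX] using h.hasFDerivAt.fst.hasDerivAt.deriv
  have hy : deriv (fun t => ptY (γ t)) s = v.2.1 := by
    simpa [ptY] using h.hasFDerivAt.snd.fst.hasDerivAt.deriv
  have hθ : deriv (fun t => ptTheta (γ t)) s = v.2.2 := by
    simpa [ptTheta] using h.hasFDerivAt.snd.snd.hasDerivAt.deriv
  rw [speed, hx, hy, hθ]

theorem speed_eq_of_hasDerivAt_rotation {w₁ w₂ w₃ ω s : ℝ} {γ : ℝ → Pt} (hw₃ : 0 ≤ w₃)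
    (h : HasDerivAt γ (0, 0, ω) s) : speed w₁ w₂ w₃ γ s = w₃ * |ω| := by
  rw [speed_eq_of_hasDerivAt h, ← sqrt_mul_sq_eq_mul_abs hw₃]
  congr 1
  ring

theorem speed_eq_of_hasDerivAt_of_ptTheta_eq_pi_div_two {w₁ w₂ w₃ η s : ℝ} {γ : ℝ → Pt}
    (hw₁ : 0 ≤ w₁) (hθ : ptTheta (γ s) = π / 2) (h : HasDerivAt γ (0, η, 0) s) :
    speed w₁ w₂ w₃ γ s = w₁ * |η| := by
  rw [speed_eq_of_hasDerivAt h, hθ, cos_pi_div_two, sin_pi_div_two,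
    ← sqrt_mul_sq_eq_mul_abs hw₁]
  congr 1
  ring

theorem hasDerivAt_of_eqOn_affine {γ : ℝ → Pt} {a v : Pt} {U : Set ℝ} {s : ℝ} (hU : IsOpen U)
    (h : EqOn γ (fun t => a + t • v) U) (hs : s ∈ U) : HasDerivAt γ v s := by
  have hline : HasDerivAt (fun t : ℝ => a + t • v) v s := by
    simpa using ((hasDerivAt_id s).smul_const v).const_add a
  exact hline.congr_of_eventuallyEq (eventually_of_mem (hU.mem_nhds hs) h)

theorem intervalIntegrable_and_integral_eq_of_eqOn_Ioo {E : Type*} [NormedAddCommGroup E]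
    [NormedSpace ℝ E] [CompleteSpace E] {f : ℝ → E} {a b : ℝ} {c : E} (hab : a ≤ b)
    (h : EqOn f (fun _ => c) (Ioo a b)) :
    IntervalIntegrable f volume a b ∧ ∫ x in a..b, f x = (b - a) • c := by
  rw [← uIoo_of_le hab] at h
  exact ⟨(intervalIntegrable_congr_uIoo h).2 intervalIntegrable_const,
    (intervalIntegral.integral_congr_uIoo h).trans (intervalIntegral.integral_const c)⟩

theorem rDist_le_rLength {w₁ w₂ w₃ : ℝ} {p : Pt} {γ : ℝ → Pt} (hγ : PiecewiseC1On γ 0 1)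
    (h₀ : γ 0 = ((0 : ℝ), (0 : ℝ), (0 : ℝ))) (h₁ : EndsAt γ 1 p) :
    rDist w₁ w₂ w₃ p ≤ rLength w₁ w₂ w₃ γ 0 1 := by
  refine csInf_le ⟨0, ?_⟩ ⟨γ, hγ, h₀, h₁, rfl⟩
  rintro _ ⟨_, -, -, -, rfl⟩
  exact intervalIntegral.integral_nonneg zero_le_one fun _ _ => sqrt_nonneg _

def turnDriveTurn (y : ℝ) : ℝ → Pt := fun s =>
  (0, y * max 0 (min (3 * s - 1) 1), π / 2 * min (min (3 * s) (3 * (1 - s))) 1)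

section turnDriveTurn

variable (y : ℝ)

theorem turnDriveTurn_eqOn_Iio :
    EqOn (turnDriveTurn y) (fun t => (0, 0, 0) + t • (0, 0, 3 * π / 2)) (Iio (1 / 3)) := by
  intro t (ht : t < 1 / 3)
  rw [turnDriveTurn, min_eq_left (by linarith : 3 * t - 1 ≤ 1), max_eq_left (by linarith),
    min_eq_left (by linarith : 3 * t ≤ 3 * (1 - t)), min_eq_left (by linarith : 3 * t ≤ 1)]
  ext <;> simp only [Prod.fst_add, Prod.snd_add, Prod.smul_fst, Prod.smul_snd, smul_eq_mul] <;>
    ring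

theorem turnDriveTurn_eqOn_Ioo :
    EqOn (turnDriveTurn y) (fun t => (0, -y, π / 2) + t • (0, 3 * y, 0))
      (Ioo (1 / 3) (2 / 3)) := by
  rintro t ⟨ht₁, ht₂⟩
  rw [turnDriveTurn, min_eq_left (by linarith : 3 * t - 1 ≤ 1), max_eq_right (by linarith),
    min_eq_right (le_min (by linarith) (by linarith) : (1 : ℝ) ≤ min (3 * t) (3 * (1 - t)))]
  ext <;> simp only [Prod.fst_add, Prod.snd_add, Prod.smul_fst, Prod.smul_snd, smul_eq_mul] <;>
    ring

theorem turnDriveTurn_eqOn_Ioi :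
    EqOn (turnDriveTurn y) (fun t => (0, y, 3 * π / 2) + t • (0, 0, -(3 * π / 2)))
      (Ioi (2 / 3)) := by
  intro t (ht : 2 / 3 < t)
  rw [turnDriveTurn, min_eq_right (by linarith : (1 : ℝ) ≤ 3 * t - 1), max_eq_right zero_le_one,
    min_eq_right (by linarith : 3 * (1 - t) ≤ 3 * t), min_eq_left (by linarith : 3 * (1 - t) ≤ 1)]
  ext <;> simp only [Prod.fst_add, Prod.snd_add, Prod.smul_fst, Prod.smul_snd, smul_eq_mul] <;>
    ring

theorem turnDriveTurn_piecewiseC1On : PiecewiseC1On (turnDriveTurn y) 0 1 := by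
  refine ⟨by unfold turnDriveTurn; fun_prop, {1 / 3, 2 / 3}, fun s _ hs => ?_⟩
  simp only [Finset.mem_insert, Finset.mem_singleton, not_or] at hs
  rcases lt_or_gt_of_ne hs.1 with h₁ | h₁
  · exact (hasDerivAt_of_eqOn_affine isOpen_Iio (turnDriveTurn_eqOn_Iio y) h₁).differentiableAt
  rcases lt_or_gt_of_ne hs.2 with h₂ | h₂
  · exact (hasDerivAt_of_eqOn_affine isOpen_Ioo (turnDriveTurn_eqOn_Ioo y)
      ⟨h₁, h₂⟩).differentiableAt
  · exact (hasDerivAt_of_eqOn_affine isOpen_Ioi (turnDriveTurn_eqOn_Ioi y) h₂).differentiableAt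

theorem turnDriveTurn_zero : turnDriveTurn y 0 = ((0 : ℝ), (0 : ℝ), (0 : ℝ)) := by
  norm_num [turnDriveTurn]

theorem endsAt_turnDriveTurn : EndsAt (turnDriveTurn y) 1 ((0 : ℝ), y, (0 : ℝ)) :=
  ⟨0, by norm_num [turnDriveTurn, ptX, ptY, ptTheta]⟩

theorem rLength_turnDriveTurn {w₁ w₂ w₃ : ℝ} (hw₁ : 0 ≤ w₁) (hw₃ : 0 ≤ w₃) :
    rLength w₁ w₂ w₃ (turnDriveTurn y) 0 1 = w₁ * |y| + w₃ * π := by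
  obtain ⟨hi₁, hl₁⟩ := intervalIntegrable_and_integral_eq_of_eqOn_Ioo
    (f := speed w₁ w₂ w₃ (turnDriveTurn y)) (by norm_num : (0 : ℝ) ≤ 1 / 3)
    fun s hs => speed_eq_of_hasDerivAt_rotation hw₃
      (hasDerivAt_of_eqOn_affine isOpen_Iio (turnDriveTurn_eqOn_Iio y) hs.2)
  obtain ⟨hi₂, hl₂⟩ := intervalIntegrable_and_integral_eq_of_eqOn_Ioo
    (f := speed w₁ w₂ w₃ (turnDriveTurn y)) (by norm_num : (1 / 3 : ℝ) ≤ 2 / 3)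
    fun s hs => speed_eq_of_hasDerivAt_of_ptTheta_eq_pi_div_two hw₁
      (by rw [turnDriveTurn_eqOn_Ioo y hs]; simp [ptTheta])
      (hasDerivAt_of_eqOn_affine isOpen_Ioo (turnDriveTurn_eqOn_Ioo y) hs)
  obtain ⟨hi₃, hl₃⟩ := intervalIntegrable_and_integral_eq_of_eqOn_Ioo
    (f := speed w₁ w₂ w₃ (turnDriveTurn y)) (by norm_num : (2 / 3 : ℝ) ≤ 1)
    fun s hs => speed_eq_of_hasDerivAt_rotation hw₃
      (hasDerivAt_of_eqOn_affine isOpen_Ioi (turnDriveTurn_eqOn_Ioi y) hs.1)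
  rw [rLength, ← intervalIntegral.integral_add_adjacent_intervals (hi₁.trans hi₂) hi₃,
    ← intervalIntegral.integral_add_adjacent_intervals hi₁ hi₂, hl₁, hl₂, hl₃,
    smul_eq_mul, smul_eq_mul, smul_eq_mul, abs_neg, abs_mul, abs_of_pos (by positivity : (0 : ℝ) < 3 * π / 2), abs_of_pos three_pos]
  ring

end turnDriveTurn

theorem riemannian_approximations_fail_far_away_general
    (w₁ w₂ w₃ : ℝ) (hw₁ : 0 < w₁) (hw₂ : 0 < w₂) (hw₃ : 0 < w₃) (y : ℝ) :
    rhoB w₁ w₂ w₃ ((0 : ℝ), y, (0 : ℝ)) = w₂ * |y| ∧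
    rhoC w₁ w₂ w₃ ((0 : ℝ), y, (0 : ℝ)) = w₂ * |y| ∧
    u1Bnd w₂ w₃ ((0 : ℝ), y, (0 : ℝ)) = w₂ * |y| ∧
    (w₁ < w₂ → w₃ * Real.pi / (w₂ - w₁) < |y| →
      w₁ * |y| + w₃ * Real.pi < rhoB w₁ w₂ w₃ ((0 : ℝ), y, (0 : ℝ)) ∧
      rDist w₁ w₂ w₃ ((0 : ℝ), y, (0 : ℝ)) ≤ w₁ * |y| + w₃ * Real.pi) := by
  have hρb : rhoB w₁ w₂ w₃ ((0 : ℝ), y, (0 : ℝ)) = w₂ * |y| := by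
    simpa [rhoB, b1, b2, b3, ptX, ptY, ptTheta] using sqrt_mul_sq_eq_mul_abs (y := y) hw₂.le
  refine ⟨hρb, ?_, ?_, fun hlt hy => ⟨?_, ?_⟩⟩
  · simpa [rhoC, c1, c2, c3, b1, b2, _root_.sinc, ptX, ptY, ptTheta]
      using sqrt_mul_sq_eq_mul_abs (y := y) hw₂.le
  · simpa [u1Bnd, ptX, ptY, ptTheta] using sqrt_mul_sq_eq_mul_abs (y := y) hw₂.le
  · rw [div_lt_iff₀ (sub_pos.2 hlt)] at hy
    rw [hρb]
    linarith
  · calc rDist w₁ w₂ w₃ ((0 : ℝ), y, (0 : ℝ))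
        ≤ rLength w₁ w₂ w₃ (turnDriveTurn y) 0 1 :=
          rDist_le_rLength (turnDriveTurn_piecewiseC1On y) (turnDriveTurn_zero y)
            (endsAt_turnDriveTurn y)
      _ = w₁ * |y| + w₃ * π := rLength_turnDriveTurn y hw₁.le hw₃.le

theorem riemannian_approximations_fail_far_away
    (w₁ w₂ w₃ : ℝ) (hw₁ : 0 < w₁) (hw₂ : 0 < w₂) (hw₃ : 0 < w₃) (h12 : w₁ ≤ w₂) (y : ℝ) :
    rhoB w₁ w₂ w₃ ((0 : ℝ), y, (0 : ℝ)) = w₂ * |y| ∧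
    rhoC w₁ w₂ w₃ ((0 : ℝ), y, (0 : ℝ)) = w₂ * |y| ∧
    u1Bnd w₂ w₃ ((0 : ℝ), y, (0 : ℝ)) = w₂ * |y| ∧
    (w₁ < w₂ → w₃ * Real.pi / (w₂ - w₁) < |y| →
      w₁ * |y| + w₃ * Real.pi < rhoB w₁ w₂ w₃ ((0 : ℝ), y, (0 : ℝ)) ∧
      rDist w₁ w₂ w₃ ((0 : ℝ), y, (0 : ℝ)) ≤ w₁ * |y| + w₃ * Real.pi) :=
  riemannian_approximations_fail_far_away_general w₁ w₂ w₃ hw₁ hw₂ hw₃ y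
end
end

section
/- Comparison of the half-angle and logarithmic approximations: for every p = (x,y,θ) ∈ ℝ² × [−π,π] one has sinc(θ/2)·ρ_c(p) ≤ ρ_b(p) ≤ ρ_c(p). -/
open Real Set

noncomputable section

/-! On `|θ| ≤ π` the factor `s = sinc (θ/2)` is positive, so `bⁱ = s cⁱ` for `i = 1, 2` while
`b³ = c³`. Hence `ρ_b² = s² (w₁²c₁² + w₂²c₂²) + w₃²θ²` differs from `ρ_c²` only by the factor
`s² ≤ 1` on the spatial part, which gives `ρ_b ≤ ρ_c`; and `s² ρ_c² ≤ ρ_b²` because `s² ≤ 1`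
also shrinks the angular part. -/

theorem sinc_eq_real_sinc : _root_.sinc = Real.sinc := rfl

theorem sinc_pos_of_abs_lt_pi {u : ℝ} (hu : |u| < π) : 0 < _root_.sinc u := by
  rw [sinc_eq_real_sinc]
  wlog hu₀ : 0 ≤ u generalizing u
  · simpa [Real.sinc_neg] using this (u := -u) (by rwa [abs_neg]) (by linarith)
  rcases hu₀.eq_or_lt with rfl | hu₀
  · simp
  rw [Real.sinc_of_ne_zero hu₀.ne']
  exact div_pos (sin_pos_of_pos_of_lt_pi hu₀ (abs_lt.mp hu).2) hu₀

theorem sinc_sq_le_one (u : ℝ) : _root_.sinc u ^ 2 ≤ 1 :=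
  (sq_le_one_iff_abs_le_one _).mpr (Real.abs_sinc_le_one u)

theorem mul_sqrt_add_le_sqrt_sq_mul_add {s a t : ℝ} (hs : s ^ 2 ≤ 1) (ht : 0 ≤ t) :
    s * √(a + t) ≤ √(s ^ 2 * a + t) :=
  calc s * √(a + t) ≤ |s| * √(a + t) := by gcongr; exact le_abs_self s
    _ = √(s ^ 2 * (a + t)) := by rw [Real.sqrt_mul (sq_nonneg s), Real.sqrt_sq_eq_abs]
    _ ≤ √(s ^ 2 * a + t) := Real.sqrt_le_sqrt (by nlinarith)

theorem sqrt_sq_mul_add_le_sqrt_add {s a t : ℝ} (hs : s ^ 2 ≤ 1) (ha : 0 ≤ a) :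
    √(s ^ 2 * a + t) ≤ √(a + t) :=
  Real.sqrt_le_sqrt (by nlinarith)

theorem b1_eq_sinc_mul_c1 {p : Pt} (hp : _root_.sinc (ptTheta p / 2) ≠ 0) :
    b1 p = _root_.sinc (ptTheta p / 2) * c1 p := by
  rw [c1, mul_div_cancel₀ _ hp]

theorem b2_eq_sinc_mul_c2 {p : Pt} (hp : _root_.sinc (ptTheta p / 2) ≠ 0) :
    b2 p = _root_.sinc (ptTheta p / 2) * c2 p := by
  rw [c2, mul_div_cancel₀ _ hp]

theorem rhoB_eq_sqrt_sinc_sq_mul_add {p : Pt} (hp : _root_.sinc (ptTheta p / 2) ≠ 0)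
    (w₁ w₂ w₃ : ℝ) :
    rhoB w₁ w₂ w₃ p = √(_root_.sinc (ptTheta p / 2) ^ 2 * ((w₁ * c1 p) ^ 2 + (w₂ * c2 p) ^ 2)
      + (w₃ * c3 p) ^ 2) := by
  rw [rhoB, b1_eq_sinc_mul_c1 hp, b2_eq_sinc_mul_c2 hp, b3, c3]
  congr 1
  ring

theorem rhoB_rhoC_comparison_general
    (w₁ w₂ w₃ : ℝ)
    (p : Pt) (hp : ptTheta p ∈ Set.Icc (-Real.pi) Real.pi) :
    _root_.sinc (ptTheta p / 2) * rhoC w₁ w₂ w₃ p ≤ rhoB w₁ w₂ w₃ p ∧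
    rhoB w₁ w₂ w₃ p ≤ rhoC w₁ w₂ w₃ p := by
  have hθ : |ptTheta p / 2| < π := by
    rw [abs_lt]; constructor <;> linarith [hp.1, hp.2, pi_pos]
  have hs := sinc_sq_le_one (ptTheta p / 2)
  rw [rhoB_eq_sqrt_sinc_sq_mul_add (sinc_pos_of_abs_lt_pi hθ).ne', rhoC]
  exact ⟨mul_sqrt_add_le_sqrt_sq_mul_add hs (sq_nonneg _),
    sqrt_sq_mul_add_le_sqrt_add hs (by positivity)⟩

theorem rhoB_rhoC_comparison
    (w₁ w₂ w₃ : ℝ) (hw₁ : 0 < w₁) (hw₂ : 0 < w₂) (hw₃ : 0 < w₃) (h12 : w₁ ≤ w₂)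
    (p : Pt) (hp : ptTheta p ∈ Set.Icc (-Real.pi) Real.pi) :
    _root_.sinc (ptTheta p / 2) * rhoC w₁ w₂ w₃ p ≤ rhoB w₁ w₂ w₃ p ∧
    rhoB w₁ w₂ w₃ p ≤ rhoC w₁ w₂ w₃ p :=
  rhoB_rhoC_comparison_general w₁ w₂ w₃ p hp

end
end

section
/- Bound on the dual norm of the differential of ρ_b near θ = 0: there exist constants C ≥ 0 and δ > 0 such that for every p = (x,y,θ) ∈ ℝ³ \ {0} with |θ| ≤ δ, one has ‖dρ_b|_p‖_*² ≤ 1 + ((ζ² − 1)/(2w₃²))·ρ_b(p)² + C·|θ|³, where ζ := w₂/w₁. -/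
open Real Set

noncomputable section

/-!
With `u₁ = w₁b¹`, `u₂ = w₂b²`, `c = cos (θ/2)`, `s = sin (θ/2)` and `ζ = w₂/w₁` we have
`ρ_b² = u₁² + u₂² + (w₃θ)²`. The left-invariant frame rotates the half-angle coordinates by the
half angle (`A₁b¹ = c`, `A₁b² = s`, `A₂b¹ = -s`, `A₂b² = c`, `A₃b¹ = b²/2`, `A₃b² = -b¹/2`), so
`ρ_b² ‖dρ_b‖_*² = (u₁c + ζu₂s)² + (u₂c - ζ⁻¹u₁s)² + (w₃θ - (ζ - ζ⁻¹)u₁u₂/(2w₃))²`.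
Using `sin θ = 2sc` this is
`ρ_b² + (ζ² - 1)s²u₂² - (1 - ζ⁻²)s²u₁² + (ζ - ζ⁻¹)u₁u₂(sin θ - θ) + ((ζ - ζ⁻¹)/(2w₃))²u₁²u₂²`.
Since `s² ≤ θ²/4` and `(ζ - ζ⁻¹)² ≤ ζ² - 1`, the second and last terms are each at most
`(ζ² - 1)ρ_b⁴/(4w₃²)`; the third is nonpositive, and `|sin θ - θ| ≤ |θ|³/6` bounds the fourth by
`(ζ - ζ⁻¹)|θ|³ρ_b²/12`. So `C = (ζ - ζ⁻¹)/12` works for every `δ`.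
-/

lemma cos_mul_cos_half_add_sin_mul_sin_half (θ : ℝ) :
    cos θ * cos (θ / 2) + sin θ * sin (θ / 2) = cos (θ / 2) := by
  rw [← cos_sub, sub_half]

lemma sin_mul_cos_half_sub_cos_mul_sin_half (θ : ℝ) :
    sin θ * cos (θ / 2) - cos θ * sin (θ / 2) = sin (θ / 2) := by
  rw [← sin_sub, sub_half]

lemma b1_sq_add_b2_sq (p : Pt) : b1 p ^ 2 + b2 p ^ 2 = ptX p ^ 2 + ptY p ^ 2 := by
  simp only [b1, b2]
  linear_combination (ptX p ^ 2 + ptY p ^ 2) * sin_sq_add_cos_sq (ptTheta p / 2)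

section RhoB

variable {w₁ w₂ w₃ : ℝ} {p : Pt}

lemma rhoB_pos (hw₁ : 0 < w₁) (hw₂ : 0 < w₂) (hw₃ : 0 < w₃)
    (hp : p ≠ ((0 : ℝ), (0 : ℝ), (0 : ℝ))) : 0 < rhoB w₁ w₂ w₃ p := by
  refine sqrt_pos.2 (lt_of_le_of_ne (by positivity) fun h => hp ?_)
  obtain ⟨h₁₂, h₃⟩ := (add_eq_zero_iff_of_nonneg (by positivity) (by positivity)).1 h.symm
  obtain ⟨h₁, h₂⟩ := (add_eq_zero_iff_of_nonneg (by positivity) (by positivity)).1 h₁₂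
  simp only [mul_pow, mul_eq_zero, pow_eq_zero_iff two_ne_zero, hw₁.ne', hw₂.ne', hw₃.ne',
    false_or] at h₁ h₂ h₃
  have hxy : ptX p ^ 2 + ptY p ^ 2 = 0 := by rw [← b1_sq_add_b2_sq, h₁, h₂]; norm_num
  obtain ⟨hx, hy⟩ := (add_eq_zero_iff_of_nonneg (sq_nonneg _) (sq_nonneg _)).1 hxy
  obtain ⟨x, y, θ⟩ := p
  simp only [b3, ptX, ptY, ptTheta, pow_eq_zero_iff two_ne_zero] at hx hy h₃
  rw [hx, hy, h₃]

lemma rhoB_sq :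
    rhoB w₁ w₂ w₃ p ^ 2 = (w₁ * b1 p) ^ 2 + (w₂ * b2 p) ^ 2 + (w₃ * ptTheta p) ^ 2 :=
  sq_sqrt (by positivity)

lemma hasDerivAt_rhoB_comp {γ : ℝ → Pt} {t d₁ d₂ d₃ : ℝ}
    (h₁ : HasDerivAt (fun t => b1 (γ t)) d₁ t) (h₂ : HasDerivAt (fun t => b2 (γ t)) d₂ t)
    (h₃ : HasDerivAt (fun t => b3 (γ t)) d₃ t) (hρ : rhoB w₁ w₂ w₃ (γ t) ≠ 0) :
    HasDerivAt (fun t => rhoB w₁ w₂ w₃ (γ t))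
      ((w₁ ^ 2 * b1 (γ t) * d₁ + w₂ ^ 2 * b2 (γ t) * d₂ + w₃ ^ 2 * b3 (γ t) * d₃)
        / rhoB w₁ w₂ w₃ (γ t)) t := by
  have hQ : (w₁ * b1 (γ t)) ^ 2 + (w₂ * b2 (γ t)) ^ 2 + (w₃ * b3 (γ t)) ^ 2 ≠ 0 :=
    fun h => hρ (by rw [rhoB, h, sqrt_zero])
  convert ((((h₁.const_mul w₁).fun_pow 2).fun_add ((h₂.const_mul w₂).fun_pow 2)).fun_add
    ((h₃.const_mul w₃).fun_pow 2)).sqrt hQ using 1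
  · rfl
  · rw [rhoB]
    field_simp
    ring

lemma hasDerivAt_rhoB_x (hρ : rhoB w₁ w₂ w₃ p ≠ 0) :
    HasDerivAt (fun x => rhoB w₁ w₂ w₃ (x, ptY p, ptTheta p))
      ((w₁ ^ 2 * b1 p * cos (ptTheta p / 2) - w₂ ^ 2 * b2 p * sin (ptTheta p / 2))
        / rhoB w₁ w₂ w₃ p) (ptX p) := by
  obtain ⟨x, y, θ⟩ := p
  simp only [ptX, ptY, ptTheta] at hρ ⊢
  have hb₁ : HasDerivAt (fun x => b1 (x, y, θ)) (cos (θ / 2)) x := by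
    simp only [b1, ptX, ptY, ptTheta]
    simpa using ((hasDerivAt_id' x).mul_const (cos (θ / 2))).add_const (y * sin (θ / 2))
  have hb₂ : HasDerivAt (fun x => b2 (x, y, θ)) (-sin (θ / 2)) x := by
    simp only [b2, ptX, ptY, ptTheta]
    simpa using ((hasDerivAt_id' x).neg.mul_const (sin (θ / 2))).add_const (y * cos (θ / 2))
  convert hasDerivAt_rhoB_comp hb₁ hb₂ (hasDerivAt_const x θ) hρ using 1
  ring

lemma hasDerivAt_rhoB_y (hρ : rhoB w₁ w₂ w₃ p ≠ 0) :
    HasDerivAt (fun y => rhoB w₁ w₂ w₃ (ptX p, y, ptTheta p))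
      ((w₁ ^ 2 * b1 p * sin (ptTheta p / 2) + w₂ ^ 2 * b2 p * cos (ptTheta p / 2))
        / rhoB w₁ w₂ w₃ p) (ptY p) := by
  obtain ⟨x, y, θ⟩ := p
  simp only [ptX, ptY, ptTheta] at hρ ⊢
  have hb₁ : HasDerivAt (fun y => b1 (x, y, θ)) (sin (θ / 2)) y := by
    simp only [b1, ptX, ptY, ptTheta]
    simpa using ((hasDerivAt_id' y).mul_const (sin (θ / 2))).const_add (x * cos (θ / 2))
  have hb₂ : HasDerivAt (fun y => b2 (x, y, θ)) (cos (θ / 2)) y := by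
    simp only [b2, ptX, ptY, ptTheta]
    simpa using ((hasDerivAt_id' y).mul_const (cos (θ / 2))).const_add (-x * sin (θ / 2))
  convert hasDerivAt_rhoB_comp hb₁ hb₂ (hasDerivAt_const y θ) hρ using 1
  ring

lemma hasDerivAt_rhoB_theta (hρ : rhoB w₁ w₂ w₃ p ≠ 0) :
    HasDerivAt (fun θ => rhoB w₁ w₂ w₃ (ptX p, ptY p, θ))
      (((w₁ ^ 2 - w₂ ^ 2) * b1 p * b2 p / 2 + w₃ ^ 2 * ptTheta p) / rhoB w₁ w₂ w₃ p)
      (ptTheta p) := by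
  obtain ⟨x, y, θ⟩ := p
  simp only [ptX, ptY, ptTheta] at hρ ⊢
  have hhalf : HasDerivAt (fun θ : ℝ => θ / 2) (1 / 2) θ := (hasDerivAt_id θ).div_const 2
  have hb₁ : HasDerivAt (fun θ => b1 (x, y, θ)) (b2 (x, y, θ) / 2) θ :=
    ((hhalf.cos.const_mul x).fun_add (hhalf.sin.const_mul y)).congr_deriv
      (by simp only [b2, ptX, ptY, ptTheta]; ring)
  have hb₂ : HasDerivAt (fun θ => b2 (x, y, θ)) (-b1 (x, y, θ) / 2) θ :=
    ((hhalf.sin.const_mul (-x)).fun_add (hhalf.cos.const_mul y)).congr_deriv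
      (by simp only [b1, ptX, ptY, ptTheta]; ring)
  convert hasDerivAt_rhoB_comp hb₁ hb₂ (hasDerivAt_id θ) hρ using 1
  simp only [b3, ptTheta]
  ring

lemma A1d_rhoB (hρ : rhoB w₁ w₂ w₃ p ≠ 0) :
    A1d (rhoB w₁ w₂ w₃) p
      = (w₁ ^ 2 * b1 p * cos (ptTheta p / 2) + w₂ ^ 2 * b2 p * sin (ptTheta p / 2))
        / rhoB w₁ w₂ w₃ p := by
  rw [A1d, (hasDerivAt_rhoB_x hρ).deriv, (hasDerivAt_rhoB_y hρ).deriv]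
  field_simp
  linear_combination w₁ ^ 2 * b1 p * cos_mul_cos_half_add_sin_mul_sin_half (ptTheta p)
    + w₂ ^ 2 * b2 p * sin_mul_cos_half_sub_cos_mul_sin_half (ptTheta p)

lemma A2d_rhoB (hρ : rhoB w₁ w₂ w₃ p ≠ 0) :
    A2d (rhoB w₁ w₂ w₃) p
      = (w₂ ^ 2 * b2 p * cos (ptTheta p / 2) - w₁ ^ 2 * b1 p * sin (ptTheta p / 2))
        / rhoB w₁ w₂ w₃ p := by
  rw [A2d, (hasDerivAt_rhoB_x hρ).deriv, (hasDerivAt_rhoB_y hρ).deriv]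
  field_simp
  linear_combination w₂ ^ 2 * b2 p * cos_mul_cos_half_add_sin_mul_sin_half (ptTheta p)
    - w₁ ^ 2 * b1 p * sin_mul_cos_half_sub_cos_mul_sin_half (ptTheta p)

lemma A3d_rhoB (hρ : rhoB w₁ w₂ w₃ p ≠ 0) :
    A3d (rhoB w₁ w₂ w₃) p
      = ((w₁ ^ 2 - w₂ ^ 2) * b1 p * b2 p / 2 + w₃ ^ 2 * ptTheta p) / rhoB w₁ w₂ w₃ p :=
  (hasDerivAt_rhoB_theta hρ).deriv

lemma dualNormSq_eq (hw₁ : 0 < w₁) (hw₂ : 0 < w₂) (hw₃ : 0 < w₃)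
    (hρ : rhoB w₁ w₂ w₃ p ≠ 0) :
    dualNormSq w₁ w₂ w₃ p
      = ((w₁ * b1 p * cos (ptTheta p / 2) + w₂ / w₁ * (w₂ * b2 p) * sin (ptTheta p / 2)) ^ 2
          + (w₂ * b2 p * cos (ptTheta p / 2) - (w₂ / w₁)⁻¹ * (w₁ * b1 p) * sin (ptTheta p / 2)) ^ 2
          + (w₃ * ptTheta p - (w₂ / w₁ - (w₂ / w₁)⁻¹) / (2 * w₃) * (w₁ * b1 p) * (w₂ * b2 p)) ^ 2)
        / rhoB w₁ w₂ w₃ p ^ 2 := by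
  rw [dualNormSq, A1d_rhoB hρ, A2d_rhoB hρ, A3d_rhoB hρ]
  field_simp
  ring

end RhoB

section HalfAngle

variable {ζ w₃ : ℝ}

lemma sub_inv_sq_le (hζ : 1 ≤ ζ) : (ζ - ζ⁻¹) ^ 2 ≤ ζ ^ 2 - 1 := by
  have hζinv : ζ⁻¹ ^ 2 ≤ 1 :=
    pow_le_one₀ (inv_nonneg.2 (zero_le_one.trans hζ)) (inv_le_one_of_one_le₀ hζ)
  have : (ζ - ζ⁻¹) ^ 2 = ζ ^ 2 - 1 - (1 - ζ⁻¹ ^ 2) := by field_simp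
  linarith

lemma half_angle_sum_sq_eq (hw₃ : w₃ ≠ 0) (u₁ u₂ θ : ℝ) :
    (u₁ * cos (θ / 2) + ζ * u₂ * sin (θ / 2)) ^ 2
        + (u₂ * cos (θ / 2) - ζ⁻¹ * u₁ * sin (θ / 2)) ^ 2
        + (w₃ * θ - (ζ - ζ⁻¹) / (2 * w₃) * u₁ * u₂) ^ 2
      = u₁ ^ 2 + u₂ ^ 2 + (w₃ * θ) ^ 2 + (ζ ^ 2 - 1) * sin (θ / 2) ^ 2 * u₂ ^ 2
        - (1 - ζ⁻¹ ^ 2) * sin (θ / 2) ^ 2 * u₁ ^ 2 + (ζ - ζ⁻¹) * (u₁ * u₂) * (sin θ - θ)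
        + ((ζ - ζ⁻¹) / (2 * w₃)) ^ 2 * (u₁ ^ 2 * u₂ ^ 2) := by
  have hκ : 2 * w₃ * ((ζ - ζ⁻¹) / (2 * w₃)) = ζ - ζ⁻¹ := by field_simp
  have hsin : sin θ = 2 * sin (θ / 2) * cos (θ / 2) := by
    rw [← sin_two_mul, mul_div_cancel₀ θ two_ne_zero]
  rw [hsin]
  linear_combination (u₁ ^ 2 + u₂ ^ 2) * cos_sq_add_sin_sq (θ / 2) - θ * u₁ * u₂ * hκ

lemma half_angle_sum_sq_le (hζ : 1 ≤ ζ) (hw₃ : 0 < w₃) (u₁ u₂ θ : ℝ) :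
    (u₁ * cos (θ / 2) + ζ * u₂ * sin (θ / 2)) ^ 2
        + (u₂ * cos (θ / 2) - ζ⁻¹ * u₁ * sin (θ / 2)) ^ 2
        + (w₃ * θ - (ζ - ζ⁻¹) / (2 * w₃) * u₁ * u₂) ^ 2
      ≤ (1 + (ζ ^ 2 - 1) / (2 * w₃ ^ 2) * (u₁ ^ 2 + u₂ ^ 2 + (w₃ * θ) ^ 2)
          + (ζ - ζ⁻¹) / 12 * |θ| ^ 3) * (u₁ ^ 2 + u₂ ^ 2 + (w₃ * θ) ^ 2) := by
  rw [half_angle_sum_sq_eq hw₃.ne']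
  set s := sin (θ / 2)
  set Q := u₁ ^ 2 + u₂ ^ 2 + (w₃ * θ) ^ 2
  have hζinv : ζ⁻¹ ≤ 1 := inv_le_one_of_one_le₀ hζ
  have hζζ : 0 ≤ ζ - ζ⁻¹ := sub_nonneg.2 (hζinv.trans hζ)
  have hζsq : 0 ≤ ζ ^ 2 - 1 := sub_nonneg.2 (one_le_pow₀ hζ)
  have hζinvsq : 0 ≤ 1 - ζ⁻¹ ^ 2 :=
    sub_nonneg.2 (pow_le_one₀ (inv_nonneg.2 (zero_le_one.trans hζ)) hζinv)
  have hQ : 0 ≤ Q := by positivity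
  have hu₁ : u₁ ^ 2 ≤ Q := by have := sq_nonneg u₂; have := sq_nonneg (w₃ * θ); linarith
  have hu₂ : u₂ ^ 2 ≤ Q := by have := sq_nonneg u₁; have := sq_nonneg (w₃ * θ); linarith
  have hu₃ : (w₃ * θ) ^ 2 ≤ Q := by have := sq_nonneg u₁; have := sq_nonneg u₂; linarith
  have hs : s ^ 2 * (4 * w₃ ^ 2) ≤ (w₃ * θ) ^ 2 := by
    have := sin_sq_le_sq (x := θ / 2)
    nlinarith [sq_nonneg w₃]
  have hprod : |u₁ * u₂| ≤ Q / 2 := by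
    have := two_mul_le_add_sq |u₁| |u₂|
    rw [sq_abs, sq_abs, mul_assoc, ← abs_mul] at this
    linarith [sq_nonneg (w₃ * θ)]
  have bound₁ : (ζ ^ 2 - 1) * s ^ 2 * u₂ ^ 2 ≤ (ζ ^ 2 - 1) / (4 * w₃ ^ 2) * Q ^ 2 := by
    have : s ^ 2 * u₂ ^ 2 ≤ Q ^ 2 / (4 * w₃ ^ 2) := by
      rw [le_div_iff₀ (by positivity), sq Q]
      calc s ^ 2 * u₂ ^ 2 * (4 * w₃ ^ 2) = s ^ 2 * (4 * w₃ ^ 2) * u₂ ^ 2 := by ring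
        _ ≤ Q * Q := mul_le_mul (hs.trans hu₃) hu₂ (sq_nonneg _) hQ
    calc (ζ ^ 2 - 1) * s ^ 2 * u₂ ^ 2 = (ζ ^ 2 - 1) * (s ^ 2 * u₂ ^ 2) := by ring
      _ ≤ (ζ ^ 2 - 1) * (Q ^ 2 / (4 * w₃ ^ 2)) := by gcongr
      _ = (ζ ^ 2 - 1) / (4 * w₃ ^ 2) * Q ^ 2 := by ring
  have bound₂ : 0 ≤ (1 - ζ⁻¹ ^ 2) * s ^ 2 * u₁ ^ 2 := by positivity
  have bound₃ : (ζ - ζ⁻¹) * (u₁ * u₂) * (sin θ - θ) ≤ (ζ - ζ⁻¹) / 12 * |θ| ^ 3 * Q := by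
    have hsinθ : |sin θ - θ| ≤ |θ| ^ 3 / 6 := by rw [abs_sub_comm]; exact abs_sub_sin_le θ
    calc (ζ - ζ⁻¹) * (u₁ * u₂) * (sin θ - θ) ≤ (ζ - ζ⁻¹) * (|u₁ * u₂| * |sin θ - θ|) := by
          rw [mul_assoc, ← abs_mul]; gcongr; exact le_abs_self _
      _ ≤ (ζ - ζ⁻¹) * (Q / 2 * (|θ| ^ 3 / 6)) := by gcongr
      _ = (ζ - ζ⁻¹) / 12 * |θ| ^ 3 * Q := by ring
  have bound₄ : ((ζ - ζ⁻¹) / (2 * w₃)) ^ 2 * (u₁ ^ 2 * u₂ ^ 2)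
      ≤ (ζ ^ 2 - 1) / (4 * w₃ ^ 2) * Q ^ 2 := by
    have hκ : ((ζ - ζ⁻¹) / (2 * w₃)) ^ 2 ≤ (ζ ^ 2 - 1) / (4 * w₃ ^ 2) := by
      rw [div_pow, mul_pow]
      gcongr
      · exact sub_inv_sq_le hζ
      · norm_num
    rw [sq Q]
    exact mul_le_mul hκ (mul_le_mul hu₁ hu₂ (sq_nonneg _) hQ) (by positivity) (by positivity)
  linear_combination bound₁ + bound₂ + bound₃ + bound₄

end HalfAngle

theorem dual_norm_differential_rhoB_bound
    (w₁ w₂ w₃ : ℝ) (hw₁ : 0 < w₁) (hw₂ : 0 < w₂) (hw₃ : 0 < w₃) (h12 : w₁ ≤ w₂) :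
    ∃ C : ℝ, 0 ≤ C ∧ ∃ δ : ℝ, 0 < δ ∧
      ∀ p : Pt, p ≠ ((0 : ℝ), (0 : ℝ), (0 : ℝ)) → |ptTheta p| ≤ δ →
        dualNormSq w₁ w₂ w₃ p ≤
          1 + ((w₂ / w₁) ^ 2 - 1) / (2 * w₃ ^ 2) * (rhoB w₁ w₂ w₃ p) ^ 2
            + C * |ptTheta p| ^ 3 := by
  have hζ : 1 ≤ w₂ / w₁ := (one_le_div hw₁).2 h12
  refine ⟨(w₂ / w₁ - (w₂ / w₁)⁻¹) / 12, ?_, 1, one_pos, fun p hp _ => ?_⟩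
  · exact div_nonneg (sub_nonneg.2 ((inv_le_one_of_one_le₀ hζ).trans hζ)) (by norm_num)
  have hρ := rhoB_pos hw₁ hw₂ hw₃ hp
  rw [dualNormSq_eq hw₁ hw₂ hw₃ hρ.ne', div_le_iff₀ (by positivity), rhoB_sq]
  exact half_angle_sum_sq_le hζ hw₃ _ _ _

end
end
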